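/- The HMSC H = Init · (Succ · Copy)* · Succ · Halt of the Turing machine reduction is loop-connected: for every state s of H and every path from s to s, every cMSC obtained by composing its labels is connected. -/

import Mathlib

/-! Core definitions: compositional message sequence charts (cMSCs),
concatenation, infinite products, completeness and connectedness. -/

namespace HMSCPaper

/-- Communication actions: `send p q` is `p!q`, `recv p q` is `p?q`
(process `p` receives from `q`). -/
inductive Act (P : Type) where
  | send : P → P → Act P
  | recv : P → P → Act P

/-- The process executing an action. -/
def Act.proc {P : Type} : Act P → P
  | .send p _ => p
  | .recv p _ => p

/-- A compositional MSC over processes `P` and messages `Msg`: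
a partially ordered set of events labeled by actions, with a message-matching
relation `tri` (◁) satisfying FIFO per channel, the order being generated by
process successors and message edges, unmatched events carrying a message of `Msg`. -/
structure CMSC (P Msg : Type) where
  E : Type
  le : E → E → Prop
  tri : E → E → Prop
  lab : E → Act P
  msg : E → Option Msg
  nonempty : Nonempty E
  le_refl : ∀ e, le e e
  le_trans : ∀ {a b c}, le a b → le b c → le a c
  le_antisymm : ∀ {a b}, le a b → le b a → a = b
  /-- events of the same process are totally ordered -/
  proc_total : ∀ e f, (lab e).proc = (lab f).proc → le e f ∨ le f e
  /-- every event has finitely many predecessors on its own process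
  (per-process order type finite or ω) -/
  proc_wf : ∀ e, Finite {f : E // (lab f).proc = (lab e).proc ∧ le f e}
  tri_le : ∀ {e f}, tri e f → le e f
  /-- matched pairs are send/receive pairs on a channel -/
  tri_lab : ∀ {e f}, tri e f → ∃ p q, lab e = Act.send p q ∧ lab f = Act.recv q p
  /-- FIFO policy per channel -/
  fifo : ∀ {e e' f f' p q}, tri e f → tri e' f' →
    lab e = Act.send p q → lab e' = Act.send p q → (le e e' ↔ le f f')
  /-- exactly the unmatched events carry a message label -/
  msg_dom : ∀ e, (msg e ≠ none) ↔ ((∀ f, ¬ tri e f) ∧ (∀ f, ¬ tri f e))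
  /-- the partial order is the reflexive transitive closure of
  process successor and message edges -/
  le_gen : ∀ e f, le e f ↔ Relation.ReflTransGen
    (fun a b => tri a b ∨ ((lab a).proc = (lab b).proc ∧ le a b ∧ a ≠ b ∧
      ∀ c, (lab c).proc = (lab a).proc → le a c → le c b → c = a ∨ c = b)) e f
  /-- unmatched events with the same action label as a matched pair occur after
  the matched send / before the matched receive -/
  unm_late : ∀ {e f} (g : E), tri e f →
    ((∀ h, ¬ tri g h) ∧ (∀ h, ¬ tri h g)) →
    ((lab g = lab e → le e g ∧ e ≠ g) ∧ (lab g = lab f → le g f ∧ g ≠ f))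

/-- An event is unmatched if it is related to no event by ◁. -/
def CMSC.Unmatched {P Msg : Type} (M : CMSC P Msg) (e : M.E) : Prop :=
  (∀ f, ¬ M.tri e f) ∧ (∀ f, ¬ M.tri f e)

/-- A (complete) MSC: no unmatched events. -/
def CMSC.Complete {P Msg : Type} (M : CMSC P Msg) : Prop :=
  ∀ e, ¬ M.Unmatched e

/-- A cMSC is connected if the undirected graph on events
with edges `≤ ∪ ≤⁻¹` is connected. -/
def CMSC.Connected {P Msg : Type} (M : CMSC P Msg) : Prop :=
  ∀ x y : M.E, Relation.ReflTransGen (fun a b => M.le a b ∨ M.le b a) x y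

/-- Witness that `M` belongs to the concatenation `M₁ ∘ M₂`: `M` is the vertical
stacking of `M₁` above `M₂`, with per-process order `E¹_p × E²_p` added, and
possibly new message edges matching unmatched sends of `M₁` with unmatched
receives of `M₂` carrying the same message. -/
structure IsConcat {P Msg : Type} (M₁ M₂ M : CMSC P Msg) where
  eqv : M.E ≃ (M₁.E ⊕ M₂.E)
  lab_eq : ∀ e, M.lab e = Sum.elim M₁.lab M₂.lab (eqv e)
  le_left : ∀ a b : M₁.E, (M₁.lab a).proc = (M₁.lab b).proc →
    (M.le (eqv.symm (.inl a)) (eqv.symm (.inl b)) ↔ M₁.le a b)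
  le_right : ∀ a b : M₂.E, (M₂.lab a).proc = (M₂.lab b).proc →
    (M.le (eqv.symm (.inr a)) (eqv.symm (.inr b)) ↔ M₂.le a b)
  le_cross : ∀ (a : M₁.E) (b : M₂.E), (M₁.lab a).proc = (M₂.lab b).proc →
    M.le (eqv.symm (.inl a)) (eqv.symm (.inr b))
  tri_left : ∀ a b : M₁.E,
    (M.tri (eqv.symm (.inl a)) (eqv.symm (.inl b)) ↔ M₁.tri a b)
  tri_right : ∀ a b : M₂.E,
    (M.tri (eqv.symm (.inr a)) (eqv.symm (.inr b)) ↔ M₂.tri a b)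
  tri_cross : ∀ (a : M₁.E) (b : M₂.E),
    M.tri (eqv.symm (.inl a)) (eqv.symm (.inr b)) →
    M₁.msg a = M₂.msg b ∧ M₁.msg a ≠ none
  tri_back : ∀ (a : M₂.E) (b : M₁.E), ¬ M.tri (eqv.symm (.inr a)) (eqv.symm (.inl b))
  msg_eq : ∀ e, M.Unmatched e → M.msg e = Sum.elim M₁.msg M₂.msg (eqv e)

/-- `M ∈ M₁ ∘ M₂`. -/
def ConcatMem {P Msg : Type} (M₁ M₂ M : CMSC P Msg) : Prop :=
  Nonempty (IsConcat M₁ M₂ M)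

/-- `M` is a composition of the nonempty list `l` of cMSCs (left to right). -/
def ConcatChain {P Msg : Type} : List (CMSC P Msg) → CMSC P Msg → Prop
  | [], _ => False
  | [N], M => M = N
  | N :: N' :: l, M => ∃ M', ConcatChain (N' :: l) M' ∧ ConcatMem N M' M

end HMSCPaper

namespace HMSCPaper

/-- The two processes of the Turing machine reduction. -/
inductive TwoProc where
  | p | q
deriving DecidableEq

/-- A Turing machine as in the reduction: states `S`, tape alphabet `Γ` with
left endmarker and blank, transitions rewriting windows of three symbols,
with the machine state written on the tape between tape symbols. -/
structure TM (S Γ : Type) where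
  s₀ : S
  sh : S
  lend : Γ
  blank : Γ
  Δ : Set ((Γ × S × Γ) × ((S ⊕ Γ) × (S ⊕ Γ) × (S ⊕ Γ)))

/-- One step of the Turing machine on configurations (words over `S ⊕ Γ`). -/
def TM.Step {S Γ : Type} (T : TM S Γ) (C C' : List (S ⊕ Γ)) : Prop :=
  ∃ (u v : List (S ⊕ Γ)) (a : Γ) (s : S) (b : Γ) (β : (S ⊕ Γ) × (S ⊕ Γ) × (S ⊕ Γ)),
    ((a, s, b), β) ∈ T.Δ ∧
    C = u ++ [Sum.inr a, Sum.inl s, Sum.inr b] ++ v ∧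
    C' = u ++ [β.1, β.2.1, β.2.2] ++ v

/-- The machine halts on the empty word: from some initial configuration
`▹ s₀ ♭^N` (N ≥ 1) it reaches a configuration containing the halting state. -/
def TM.HaltsOnEmpty {S Γ : Type} (T : TM S Γ) : Prop :=
  ∃ (N : ℕ), 1 ≤ N ∧ ∃ (k : ℕ) (Cs : ℕ → List (S ⊕ Γ)),
    Cs 0 = [Sum.inr T.lend, Sum.inl T.s₀] ++ List.replicate N (Sum.inr T.blank) ∧
    (∀ i < k, T.Step (Cs i) (Cs (i + 1))) ∧
    Sum.inl T.sh ∈ Cs k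

/-- Message alphabet of the reduction: `#` is `none`, symbols of `S ∪ Γ` are `some`. -/
abbrev TMMsg (S Γ : Type) := Option (S ⊕ Γ)

/-- `M^i_m`: a single unmatched send `p!q` with message `m` (for `m = #` or `m ∈ S ∪ Γ`). -/
def IsMSend {S Γ : Type} (m : TMMsg S Γ) (M : CMSC TwoProc (TMMsg S Γ)) : Prop :=
  ∃ e : M.E, (∀ x, x = e) ∧ M.lab e = .send .p .q ∧ M.msg e = some m ∧
    ∀ x y, ¬ M.tri x y

/-- `M_#`: on `q`, an unmatched receive `q?p` with message `#`, then a complete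
message from `q` to `p`, then on `p` an unmatched send `p!q` with message `#`. -/
def IsMSharp {S Γ : Type} (M : CMSC TwoProc (TMMsg S Γ)) : Prop :=
  ∃ e₁ e₂ e₃ e₄ : M.E,
    e₁ ≠ e₂ ∧ e₁ ≠ e₃ ∧ e₁ ≠ e₄ ∧ e₂ ≠ e₃ ∧ e₂ ≠ e₄ ∧ e₃ ≠ e₄ ∧
    (∀ x, x = e₁ ∨ x = e₂ ∨ x = e₃ ∨ x = e₄) ∧
    M.lab e₁ = .recv .q .p ∧ M.msg e₁ = some none ∧
    M.lab e₂ = .send .q .p ∧ M.lab e₃ = .recv .p .q ∧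
    M.lab e₄ = .send .p .q ∧ M.msg e₄ = some none ∧
    M.le e₁ e₂ ∧ M.le e₃ e₄ ∧ M.tri e₂ e₃ ∧
    ∀ x y, M.tri x y → x = e₂ ∧ y = e₃

/-- `M^q_γ`: on `q`, an unmatched receive `q?p` of `γ` followed by an unmatched
send `q!p` of `γ`. -/
def IsMq {S Γ : Type} (γ : S ⊕ Γ) (M : CMSC TwoProc (TMMsg S Γ)) : Prop :=
  ∃ e f : M.E, e ≠ f ∧ (∀ x, x = e ∨ x = f) ∧ M.le e f ∧
    M.lab e = .recv .q .p ∧ M.msg e = some (some γ) ∧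
    M.lab f = .send .q .p ∧ M.msg f = some (some γ) ∧
    ∀ x y, ¬ M.tri x y

/-- `M^q_δ` for a transition `δ = (a s b, β₁β₂β₃)`: on `q`, alternately receive
`a`, send `β₁`, receive `s`, send `β₂`, receive `b`, send `β₃` (all unmatched). -/
def IsMqDelta {S Γ : Type}
    (δ : (Γ × S × Γ) × ((S ⊕ Γ) × (S ⊕ Γ) × (S ⊕ Γ)))
    (M : CMSC TwoProc (TMMsg S Γ)) : Prop :=
  ∃ x : Fin 6 → M.E, Function.Injective x ∧ (∀ e, ∃ i, e = x i) ∧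
    (∀ i j : Fin 6, i ≤ j → M.le (x i) (x j)) ∧
    M.lab (x 0) = .recv .q .p ∧ M.msg (x 0) = some (some (Sum.inr δ.1.1)) ∧
    M.lab (x 1) = .send .q .p ∧ M.msg (x 1) = some (some δ.2.1) ∧
    M.lab (x 2) = .recv .q .p ∧ M.msg (x 2) = some (some (Sum.inl δ.1.2.1)) ∧
    M.lab (x 3) = .send .q .p ∧ M.msg (x 3) = some (some δ.2.2.1) ∧
    M.lab (x 4) = .recv .q .p ∧ M.msg (x 4) = some (some (Sum.inr δ.1.2.2)) ∧
    M.lab (x 5) = .send .q .p ∧ M.msg (x 5) = some (some δ.2.2.2) ∧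
    ∀ e f, ¬ M.tri e f

/-- `M^p_γ`: on `p`, an unmatched receive `p?q` of `γ` followed by an unmatched
send `p!q` of `γ`. -/
def IsMp {S Γ : Type} (γ : S ⊕ Γ) (M : CMSC TwoProc (TMMsg S Γ)) : Prop :=
  ∃ e f : M.E, e ≠ f ∧ (∀ x, x = e ∨ x = f) ∧ M.le e f ∧
    M.lab e = .recv .p .q ∧ M.msg e = some (some γ) ∧
    M.lab f = .send .p .q ∧ M.msg f = some (some γ) ∧
    ∀ x y, ¬ M.tri x y

/-- `M^f_γ`: a single unmatched receive `p?q` with message `γ`. -/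
def IsMfin {S Γ : Type} (γ : S ⊕ Γ) (M : CMSC TwoProc (TMMsg S Γ)) : Prop :=
  ∃ e : M.E, (∀ x, x = e) ∧ M.lab e = .recv .p .q ∧ M.msg e = some (some γ) ∧
    ∀ x y, ¬ M.tri x y

/-- `M^f_#`: on `q`, an unmatched receive `q?p` with `#`, then a complete
message from `q` to `p`. -/
def IsMfinSharp {S Γ : Type} (M : CMSC TwoProc (TMMsg S Γ)) : Prop :=
  ∃ e₁ e₂ e₃ : M.E, e₁ ≠ e₂ ∧ e₁ ≠ e₃ ∧ e₂ ≠ e₃ ∧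
    (∀ x, x = e₁ ∨ x = e₂ ∨ x = e₃) ∧
    M.lab e₁ = .recv .q .p ∧ M.msg e₁ = some none ∧
    M.lab e₂ = .send .q .p ∧ M.lab e₃ = .recv .p .q ∧
    M.le e₁ e₂ ∧ M.tri e₂ e₃ ∧
    ∀ x y, M.tri x y → x = e₂ ∧ y = e₃

/-! Word-language combinators over lists of cMSCs. -/

def LAtom {α : Type _} (pred : α → Prop) : Set (List α) :=
  {l | ∃ M, pred M ∧ l = [M]}

def LCat {α : Type _} (L₁ L₂ : Set (List α)) : Set (List α) :=
  {l | ∃ l₁ ∈ L₁, ∃ l₂ ∈ L₂, l = l₁ ++ l₂}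

def LStar {α : Type _} (L : Set (List α)) : Set (List α) :=
  {l | ∃ ls : List (List α), (∀ x ∈ ls, x ∈ L) ∧ l = ls.flatten}

def LPlus {α : Type _} (L : Set (List α)) : Set (List α) :=
  {l | ∃ ls : List (List α), ls ≠ [] ∧ (∀ x ∈ ls, x ∈ L) ∧ l = ls.flatten}

variable {S Γ : Type}

/-- `Init = M^i_# M^i_▹ M^i_{s₀} (M^i_♭)⁺`. -/
def InitL (T : TM S Γ) : Set (List (CMSC TwoProc (TMMsg S Γ))) :=
  LCat (LAtom (IsMSend none))
    (LCat (LAtom (IsMSend (some (Sum.inr T.lend))))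
      (LCat (LAtom (IsMSend (some (Sum.inl T.s₀))))
        (LPlus (LAtom (IsMSend (some (Sum.inr T.blank)))))))

/-- `Succ = M_# (Σ_γ M^q_γ)* (Σ_δ M^q_δ) (Σ_γ M^q_γ)*`. -/
def SuccL (T : TM S Γ) : Set (List (CMSC TwoProc (TMMsg S Γ))) :=
  LCat (LAtom IsMSharp)
    (LCat (LStar (LAtom (fun M => ∃ γ : Γ, IsMq (Sum.inr γ) M)))
      (LCat (LAtom (fun M => ∃ δ ∈ T.Δ, IsMqDelta δ M))
        (LStar (LAtom (fun M => ∃ γ : Γ, IsMq (Sum.inr γ) M)))))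

/-- `Copy = (Σ_{γ ∈ S ∪ Γ} M^p_γ)⁺`. -/
def CopyL (T : TM S Γ) : Set (List (CMSC TwoProc (TMMsg S Γ))) :=
  LPlus (LAtom (fun M => ∃ γ : S ⊕ Γ, IsMp γ M))

/-- `Halt = (Σ_{γ∈Γ} M^f_γ)⁺ M^f_{s_h} (Σ_{γ∈Γ} M^f_γ)* M^f_#`. -/
def HaltL (T : TM S Γ) : Set (List (CMSC TwoProc (TMMsg S Γ))) :=
  LCat (LPlus (LAtom (fun M => ∃ γ : Γ, IsMfin (Sum.inr γ) M)))
    (LCat (LAtom (IsMfin (Sum.inl T.sh)))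
      (LCat (LStar (LAtom (fun M => ∃ γ : Γ, IsMfin (Sum.inr γ) M)))
        (LAtom IsMfinSharp)))

/-- `H = Init (Succ Copy)* Succ Halt`. -/
def HL (T : TM S Γ) : Set (List (CMSC TwoProc (TMMsg S Γ))) :=
  LCat (InitL T) (LCat (LStar (LCat (SuccL T) (CopyL T))) (LCat (SuccL T) (HaltL T)))

end HMSCPaper

namespace HMSCPaper

lemma twoproc_mem (u v w : TwoProc) (huv : u ≠ v) : w = u ∨ w = v := by
  cases u <;> cases v <;> cases w <;> simp_all

/-- If some `le` edge crosses the two processes, the cMSC is connected. -/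
lemma connected_of_cross {Msg : Type} (M : CMSC TwoProc Msg)
    (a b : M.E) (hle : M.le a b) (hne : (M.lab a).proc ≠ (M.lab b).proc) :
    M.Connected := by
  have hsymm : Symmetric (fun x y : M.E => M.le x y ∨ M.le y x) :=
    fun x y h => h.symm
  intro x y
  by_cases hxy : (M.lab x).proc = (M.lab y).proc
  · exact Relation.ReflTransGen.single (M.proc_total x y hxy)
  · have key : ∀ u v : M.E, (M.lab u).proc = (M.lab a).proc →
        (M.lab v).proc = (M.lab b).proc →
        Relation.ReflTransGen (fun x y => M.le x y ∨ M.le y x) u v := by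
      intro u v hu hv
      have h1 : Relation.ReflTransGen (fun x y => M.le x y ∨ M.le y x) u a :=
        Relation.ReflTransGen.single (M.proc_total u a hu)
      have h2 : Relation.ReflTransGen (fun x y => M.le x y ∨ M.le y x) a b :=
        Relation.ReflTransGen.single (Or.inl hle)
      have h3 : Relation.ReflTransGen (fun x y => M.le x y ∨ M.le y x) b v :=
        Relation.ReflTransGen.single (M.proc_total b v hv.symm)
      exact (h1.trans h2).trans h3
    rcases twoproc_mem _ _ ((M.lab x).proc) hne with hx | hx
    · rcases twoproc_mem _ _ ((M.lab y).proc) hne with hy | hy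
      · exact absurd (hx.trans hy.symm) hxy
      · exact key x y hx hy
    · rcases twoproc_mem _ _ ((M.lab y).proc) hne with hy | hy
      · exact (@Relation.ReflTransGen.symmetric _ _ ⟨hsymm⟩).symm _ _ (key y x hy hx)
      · exact absurd (hx.trans hy.symm) hxy

/-- In a chain composition, all events live on the processes of the pieces. -/
lemma chain_proc {P Msg : Type} (pr : P) :
    ∀ (l : List (CMSC P Msg)) (M : CMSC P Msg), ConcatChain l M →
      (∀ N ∈ l, ∀ e : N.E, (N.lab e).proc = pr) →
      ∀ e : M.E, (M.lab e).proc = pr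
  | [], _, h => h.elim
  | [N], M, h => by
    intro hl e
    cases h
    exact hl N (by simp) e
  | N :: N' :: l, M, h => by
    obtain ⟨M', hc, ⟨C⟩⟩ := h
    intro hl e
    have hlab := C.lab_eq e
    rcases hh : C.eqv e with a | b
    · rw [hlab, hh]; exact hl N (by simp) a
    · rw [hlab, hh]
      exact chain_proc pr (N' :: l) M' hc (fun N hN => hl N (by simp [hN])) b

/-- Message edges of the pieces survive (up to relabeling) in a chain
composition. -/
lemma chain_tri {P Msg : Type} :
    ∀ (l : List (CMSC P Msg)) (M : CMSC P Msg), ConcatChain l M →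
      ∀ N ∈ l, ∀ a b : N.E, N.tri a b →
      ∃ a' b' : M.E, M.tri a' b' ∧ M.lab a' = N.lab a ∧ M.lab b' = N.lab b
  | [], _, h => h.elim
  | [N'], M, h => by
    intro N hN a b htri
    cases h
    have : N = N' := by simpa using hN
    subst this
    exact ⟨a, b, htri, rfl, rfl⟩
  | N₀ :: N₁ :: l, M, h => by
    obtain ⟨M', hc, ⟨C⟩⟩ := h
    intro N hN a b htri
    rcases List.mem_cons.mp hN with rfl | hN'
    · refine ⟨C.eqv.symm (.inl a), C.eqv.symm (.inl b),
        (C.tri_left a b).mpr htri, ?_, ?_⟩ <;>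
        simp [C.lab_eq]
    · obtain ⟨a', b', htri', ha', hb'⟩ :=
        chain_tri (N₁ :: l) M' hc N hN' a b htri
      refine ⟨C.eqv.symm (.inr a'), C.eqv.symm (.inr b'),
        (C.tri_right a' b').mpr htri', ?_, ?_⟩ <;>
        simp [C.lab_eq, ha', hb']

/-- A chain containing a piece with a cross-process message edge is connected. -/
lemma chain_connected_of_cross_tri {Msg : Type}
    (l : List (CMSC TwoProc Msg)) (M : CMSC TwoProc Msg)
    (hc : ConcatChain l M) (N : CMSC TwoProc Msg) (hN : N ∈ l)
    (a b : N.E) (htri : N.tri a b)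
    (hproc : (N.lab a).proc ≠ (N.lab b).proc) : M.Connected := by
  obtain ⟨a', b', htri', ha', hb'⟩ := chain_tri l M hc N hN a b htri
  exact connected_of_cross M a' b' (M.tri_le htri')
    (by rw [ha', hb']; exact hproc)

/-- the HMSC `H = Init (Succ Copy)* Succ Halt` of the Turing
machine reduction is loop-connected: every cMSC obtained by composing the
labels of a cycle of `H` is connected. The cycles of `H` are: self-loops whose
labels live on a single process (inside `Init`, `Succ`, `Copy`, `Halt`), and
cycles through the `(Succ Copy)` loop, whose label sequences are exactly the
rotations `l₁ ++ l₂` of words `l₂ ++ l₁ ∈ (Succ Copy)⁺`. All basic cMSCs,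
including the two-process ones `M_#` and `M^f_#`, are connected. -/
theorem tm_hmsc_loop_connected {S Γ : Type} (T : TM S Γ) :
    (∀ (pr : TwoProc) (l : List (CMSC TwoProc (TMMsg S Γ))), l ≠ [] →
      (∀ N ∈ l, ∀ e : N.E, (N.lab e).proc = pr) →
      ∀ M, ConcatChain l M → M.Connected) ∧
    (∀ M : CMSC TwoProc (TMMsg S Γ), IsMSharp M → M.Connected) ∧
    (∀ M : CMSC TwoProc (TMMsg S Γ), IsMfinSharp M → M.Connected) ∧
    (∀ l₁ l₂ : List (CMSC TwoProc (TMMsg S Γ)),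
      (l₂ ++ l₁) ∈ LPlus (LCat (SuccL T) (CopyL T)) →
      ∀ M, ConcatChain (l₁ ++ l₂) M → M.Connected) := by
  refine ⟨?_, ?_, ?_, ?_⟩
  · -- single-process loops
    intro pr l _hne hl M hc x y
    exact Relation.ReflTransGen.single
      (M.proc_total x y (by
        rw [chain_proc pr l M hc hl x, chain_proc pr l M hc hl y]))
  · -- M_# is connected
    rintro M ⟨e₁, e₂, e₃, e₄, _, _, _, _, _, _, _, _, _, hl₂, hl₃, _, _, _, _,
      htri, _⟩
    exact connected_of_cross M e₂ e₃ (M.tri_le htri)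
      (by rw [hl₂, hl₃]; simp [Act.proc])
  · -- M^f_# is connected
    rintro M ⟨e₁, e₂, e₃, _, _, _, _, _, _, hl₂, hl₃, _, htri, _⟩
    exact connected_of_cross M e₂ e₃ (M.tri_le htri)
      (by rw [hl₂, hl₃]; simp [Act.proc])
  · -- cycles through the (Succ · Copy) loop
    rintro l₁ l₂ ⟨ls, hne, hmem, hflat⟩ M hc
    obtain ⟨w, ws, rfl⟩ := List.exists_cons_of_ne_nil hne
    obtain ⟨s, hs, c, _hc2, rfl⟩ := hmem _ List.mem_cons_self
    obtain ⟨s₁, hs₁, s₂, _hs₂, rfl⟩ := hs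
    obtain ⟨N, hNsharp, rfl⟩ := hs₁
    have hNmem : N ∈ l₁ ++ l₂ := by
      have : N ∈ l₂ ++ l₁ := by
        rw [hflat]
        simp [List.flatten]
      rw [List.mem_append] at this ⊢
      exact this.symm
    obtain ⟨e₁, e₂, e₃, e₄, _, _, _, _, _, _, _, _, _, hl₂, hl₃, _, _, _, _,
      htri, _⟩ := hNsharp
    exact chain_connected_of_cross_tri _ M hc N hNmem e₂ e₃ htri
      (by rw [hl₂, hl₃]; simp [Act.proc])

end HMSCPaper
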